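/- (Positivity of the density) Suppose H is strictly convex and C², g is strictly increasing, and φ > 0 on 𝕋^d. If (m, u) ∈ C²(𝕋^d; ℝ₀⁺) × C¹(𝕋^d) solves the stationary MFG system -u - H(Du) + g(m) - V = 0 and m - div(m D_pH(Du)) - φ = 0 on 𝕋^d, then m(x) > 0 for all x ∈ 𝕋^d. -/

import Mathlib

noncomputable section
open MeasureTheory

/-- Euclidean space `ℝ^d`, the covering space of the torus `𝕋^d`. -/
abbrev Ed (d : ℕ) := Fin d → ℝ

/-- A fundamental domain (unit cube) for the torus `𝕋^d = ℝ^d / ℤ^d`. -/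
def cube (d : ℕ) : Set (Ed d) := Set.univ.pi fun _ => Set.Icc (0:ℝ) 1

/-- `ℤ^d`-periodicity: a function on `ℝ^d` represents a function on the torus `𝕋^d`. -/
def Per {d : ℕ} (u : Ed d → ℝ) : Prop :=
  ∀ (x : Ed d) (m : Fin d → ℤ), u (x + fun i => (m i : ℝ)) = u x

/-- `i`-th partial derivative. -/
def pd {d : ℕ} (i : Fin d) (u : Ed d → ℝ) (x : Ed d) : ℝ :=
  fderiv ℝ u x (Pi.single i 1)

/-- The gradient `Du`. -/
def grad {d : ℕ} (u : Ed d → ℝ) (x : Ed d) : Ed d := fun i => pd i u x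

/-- The `i`-th component of the flux `m D_pH(Du)`. -/
def flux {d : ℕ} (H : Ed d → ℝ) (m u : Ed d → ℝ) (i : Fin d) (y : Ed d) : ℝ :=
  m y * pd i H (grad u y)

/-- The divergence `div(m D_pH(Du))`. -/
def divFlux {d : ℕ} (H : Ed d → ℝ) (m u : Ed d → ℝ) (x : Ed d) : ℝ :=
  ∑ i, pd i (flux H m u i) x

/-- First component of the MFG operator: `-u - H(Du) + g(m) - V`. -/
def F1 {d : ℕ} (H : Ed d → ℝ) (g : ℝ → ℝ) (V : Ed d → ℝ) (m u : Ed d → ℝ) (x : Ed d) : ℝ :=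
  -(u x) - H (grad u x) + g (m x) - V x

/-- Second component of the MFG operator: `m - div(m D_pH(Du)) - φ`. -/
def F2 {d : ℕ} (H : Ed d → ℝ) (φ : Ed d → ℝ) (m u : Ed d → ℝ) (x : Ed d) : ℝ :=
  m x - divFlux H m u x - φ x

/-! At a zero `x` of the nonnegative density `m`, `m` is minimal, so `m` vanishes to first
order at `x`. Each flux component `m ∂ᵢH(Du)` is `m` times a coefficient that is merely
continuous at `x`, hence it also vanishes to first order, so `div(m D_pH(Du))(x) = 0`; unlike
the product-rule computation, this needs no second derivatives of `u`. The Fokker–Planck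
equation at `x` then reads `0 = φ(x)`, contradicting `φ > 0`. -/

theorem hasFDerivAt_zero_mul_of_isBigO_one {𝕜 E : Type*} [NontriviallyNormedField 𝕜]
    [NormedAddCommGroup E] [NormedSpace 𝕜 E] {f c : E → 𝕜} {x : E}
    (hf : HasFDerivAt f (0 : E →L[𝕜] 𝕜) x) (hfx : f x = 0)
    (hc : c =O[nhds x] fun _ => (1 : ℝ)) :
    HasFDerivAt (fun y => f y * c y) (0 : E →L[𝕜] 𝕜) x := by
  have hf_o : f =o[nhds x] fun y => ‖y - x‖ := by
    simpa [hfx] using hf.isLittleO.norm_right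
  refine HasFDerivAt.of_isLittleO ?_
  simpa [hfx] using (hf_o.mul_isBigO hc).trans_isBigO (by simp [Asymptotics.isBigO_refl])

theorem hasFDerivAt_zero_of_nonneg_of_eq_zero {E : Type*} [NormedAddCommGroup E]
    [NormedSpace ℝ E] {f : E → ℝ} {x : E} (hf : DifferentiableAt ℝ f x)
    (hnn : ∀ y, 0 ≤ f y) (hfx : f x = 0) : HasFDerivAt f (0 : E →L[ℝ] ℝ) x := by
  have hmin : IsLocalMin f x := Filter.Eventually.of_forall fun y => hfx ▸ hnn y
  simpa [hmin.fderiv_eq_zero] using hf.hasFDerivAt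

theorem continuous_pd {d : ℕ} {u : Ed d → ℝ} (hu : ContDiff ℝ 1 u) (i : Fin d) :
    Continuous (pd i u) :=
  (hu.continuous_fderiv one_ne_zero).clm_apply continuous_const

theorem continuous_grad {d : ℕ} {u : Ed d → ℝ} (hu : ContDiff ℝ 1 u) :
    Continuous (grad u) :=
  continuous_pi (continuous_pd hu)

theorem divFlux_eq_zero_of_eq_zero {d : ℕ} {H m u : Ed d → ℝ} {x : Ed d}
    (hH : ContDiff ℝ 1 H) (hu : ContDiff ℝ 1 u) (hm : HasFDerivAt m (0 : Ed d →L[ℝ] ℝ) x)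
    (hmx : m x = 0) : divFlux H m u x = 0 := by
  refine Finset.sum_eq_zero fun i _ => ?_
  have hcoeff : Continuous fun y => pd i H (grad u y) :=
    (continuous_pd hH i).comp (continuous_grad hu)
  have hflux : HasFDerivAt (flux H m u i) (0 : Ed d →L[ℝ] ℝ) x :=
    hasFDerivAt_zero_mul_of_isBigO_one hm hmx (hcoeff.continuousAt.isBigO_one ℝ)
  simp [pd, hflux.fderiv]

theorem stationary_MFG_density_positive_general {d : ℕ}
    (H : Ed d → ℝ) (φ : Ed d → ℝ)
    (hH : ContDiff ℝ 2 H)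
    (hφpos : ∀ x, 0 < φ x)
    (m u : Ed d → ℝ)
    (hm : ContDiff ℝ 2 m) (hmnn : ∀ x, 0 ≤ m x)
    (hu : ContDiff ℝ 1 u)
    (heq2 : ∀ x, F2 H φ m u x = 0) :
    ∀ x, 0 < m x := by
  intro x
  refine (hmnn x).lt_of_ne fun hmx => (hφpos x).ne' ?_
  have hdm := hasFDerivAt_zero_of_nonneg_of_eq_zero
    ((hm.differentiable two_ne_zero) x) hmnn hmx.symm
  have hdiv := divFlux_eq_zero_of_eq_zero (hH.of_le one_le_two) hu hdm hmx.symm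
  simpa [F2, hdiv, ← hmx] using heq2 x

/-- Positivity of the density: if `H` is strictly convex and `C²`, `g` is strictly
increasing, `φ > 0` on `𝕋^d`, and `(m,u) ∈ C²(𝕋^d;ℝ₀⁺) × C¹(𝕋^d)` solves the
stationary MFG system `-u - H(Du) + g(m) - V = 0`, `m - div(m D_pH(Du)) - φ = 0`,
then `m > 0` everywhere. -/
theorem stationary_MFG_density_positive {d : ℕ}
    (H : Ed d → ℝ) (g : ℝ → ℝ) (V φ : Ed d → ℝ)
    (hH : ContDiff ℝ 2 H) (hHconv : StrictConvexOn ℝ Set.univ H)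
    (hgc : ContinuousOn g (Set.Ici 0)) (hgmono : StrictMonoOn g (Set.Ici 0))
    (hV : Continuous V) (hVper : Per V)
    (hφ : Continuous φ) (hφper : Per φ) (hφpos : ∀ x, 0 < φ x)
    (m u : Ed d → ℝ)
    (hm : ContDiff ℝ 2 m) (hmper : Per m) (hmnn : ∀ x, 0 ≤ m x)
    (hu : ContDiff ℝ 1 u) (huper : Per u)
    (hflux : ∀ i, ContDiff ℝ 1 (flux H m u i))
    (heq1 : ∀ x, F1 H g V m u x = 0)
    (heq2 : ∀ x, F2 H φ m u x = 0) :
    ∀ x, 0 < m x :=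
  stationary_MFG_density_positive_general H φ hH hφpos m u hm hmnn hu heq2
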